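/- arXiv:1712.05742 — 4 statements merged into one kernel-verified Lean document; each statement's English description precedes it below -/
import Mathlib

section
/- Let F be a field and (A,B) an m×n matrix pencil over F with minimal ranks ρ(A,B) = (r,s). If r' ≥ s' are nonnegative integers, then (A,B) ∈ B_{r',s'} if and only if r' ≥ r and s' ≥ s. -/
open Matrix

/-- `(A', B')` lies in the orbit of the pencil `(A, B)` under the action of
`GL_m(F) × GL_n(F) × GL_2(F)` given by
`(P, U, T) · (A, B) = (P (t₁₁ A + t₁₂ B) Uᵀ, P (t₂₁ A + t₂₂ B) Uᵀ)`. -/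
def InOrbit {F : Type*} [Field F] {m n : ℕ}
    (A B A' B' : Matrix (Fin m) (Fin n) F) : Prop :=
  ∃ (P : Matrix (Fin m) (Fin m) F) (U : Matrix (Fin n) (Fin n) F)
    (T : Matrix (Fin 2) (Fin 2) F),
    IsUnit P.det ∧ IsUnit U.det ∧ IsUnit T.det ∧
    A' = P * (T 0 0 • A + T 0 1 • B) * U.transpose ∧
    B' = P * (T 1 0 • A + T 1 1 • B) * U.transpose

/-- The pencil `(A, B)` belongs to `B_{r,s}`: some pencil in its orbit has
first coefficient of rank `≤ r` and second coefficient of rank `≤ s`. -/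
def InBset {F : Type*} [Field F] {m n : ℕ} (r s : ℕ)
    (A B : Matrix (Fin m) (Fin n) F) : Prop :=
  ∃ A' B', InOrbit A B A' B' ∧ A'.rank ≤ r ∧ B'.rank ≤ s


/-- The pencil `(A, B)` has minimal ranks `ρ(A, B) = (r, s)`:
`s` is the minimum of `rank (t A + u B)` over `(t, u) ≠ (0, 0)`, attained at
some `(t₀, u₀)`, and `r` is the minimum of `rank (t A + u B)` over `(t, u)`
outside the span of the minimizer `(t₀, u₀)`. -/
def MinRanksAre {F : Type*} [Field F] {m n : ℕ}
    (A B : Matrix (Fin m) (Fin n) F) (r s : ℕ) : Prop :=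
  ∃ t₀ u₀ : F, (t₀, u₀) ≠ 0 ∧ (t₀ • A + u₀ • B).rank = s ∧
    (∀ t u : F, (t, u) ≠ 0 → s ≤ (t • A + u • B).rank) ∧
    (∃ t₁ u₁ : F, ((t₁, u₁) : F × F) ∉ Submodule.span F {((t₀, u₀) : F × F)} ∧
      (t₁ • A + u₁ • B).rank = r) ∧
    (∀ t u : F, ((t, u) : F × F) ∉ Submodule.span F {((t₀, u₀) : F × F)} →
      r ≤ (t • A + u • B).rank)

/-! Since `P` and `U` preserve rank, membership in `B_{r',s'}` only depends on the invertible
`T`, i.e. on two independent points of the pencil `t A + u B`. At most one of them lies on the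
line of the minimizer `(t₀, u₀)`, so one has rank `≥ r` and the other rank `≥ s`; conversely the
minimizers themselves form an invertible `T`. -/

section PairSpan

variable {F : Type*} [Field F]

theorem det_fin_two_eq_zero_of_rows_mem_span_singleton {T : Matrix (Fin 2) (Fin 2) F}
    {v : F × F} (h₀ : (T 0 0, T 0 1) ∈ Submodule.span F {v})
    (h₁ : (T 1 0, T 1 1) ∈ Submodule.span F {v}) : T.det = 0 := by
  obtain ⟨c, hc⟩ := Submodule.mem_span_singleton.mp h₀
  obtain ⟨d, hd⟩ := Submodule.mem_span_singleton.mp h₁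
  simp only [Prod.ext_iff, Prod.smul_fst, Prod.smul_snd, smul_eq_mul] at hc hd
  rw [det_fin_two, ← hc.1, ← hc.2, ← hd.1, ← hd.2]
  ring

theorem mem_span_singleton_of_mul_sub_mul_eq_zero {t₀ u₀ t u : F} (h₀ : (t₀, u₀) ≠ 0)
    (h : t * u₀ - u * t₀ = 0) : (t, u) ∈ Submodule.span F {(t₀, u₀)} := by
  rw [Submodule.mem_span_singleton]
  by_cases ht₀ : t₀ = 0
  · have hu₀ : u₀ ≠ 0 := fun hu₀ => h₀ (by rw [ht₀, hu₀]; rfl)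
    refine ⟨u / u₀, Prod.ext ?_ ?_⟩ <;> simp only [Prod.smul_mk, smul_eq_mul]
    · field_simp
      linear_combination -h
    · field_simp
  · refine ⟨t / t₀, Prod.ext ?_ ?_⟩ <;> simp only [Prod.smul_mk, smul_eq_mul]
    · field_simp
    · field_simp
      linear_combination h

theorem isUnit_det_of_notMem_span_singleton {t₀ u₀ t₁ u₁ : F} (h₀ : (t₀, u₀) ≠ 0)
    (h₁ : (t₁, u₁) ∉ Submodule.span F {(t₀, u₀)}) :
    IsUnit (!![t₁, u₁; t₀, u₀] : Matrix (Fin 2) (Fin 2) F).det := by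
  rw [det_fin_two_of, isUnit_iff_ne_zero]
  exact fun h => h₁ (mem_span_singleton_of_mul_sub_mul_eq_zero h₀ h)

end PairSpan

section Pencil

variable {F : Type*} [Field F] {m n : ℕ}

theorem inOrbit_of_isUnit_det (A B : Matrix (Fin m) (Fin n) F) {T : Matrix (Fin 2) (Fin 2) F}
    (hT : IsUnit T.det) : InOrbit A B (T 0 0 • A + T 0 1 • B) (T 1 0 • A + T 1 1 • B) :=
  ⟨1, 1, T, by simp, by simp, hT, by simp, by simp⟩

theorem InOrbit.exists_rank_eq {A B A' B' : Matrix (Fin m) (Fin n) F}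
    (h : InOrbit A B A' B') : ∃ T : Matrix (Fin 2) (Fin 2) F, IsUnit T.det ∧
      A'.rank = (T 0 0 • A + T 0 1 • B).rank ∧ B'.rank = (T 1 0 • A + T 1 1 • B).rank := by
  obtain ⟨P, U, T, hP, hU, hT, rfl, rfl⟩ := h
  have hUt : IsUnit Uᵀ.det := by rwa [det_transpose]
  refine ⟨T, hT, ?_, ?_⟩ <;>
    rw [rank_mul_eq_left_of_isUnit_det _ _ hUt, rank_mul_eq_right_of_isUnit_det _ _ hP]

theorem inBset_iff_exists_isUnit_det {r s : ℕ} {A B : Matrix (Fin m) (Fin n) F} :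
    InBset r s A B ↔ ∃ T : Matrix (Fin 2) (Fin 2) F, IsUnit T.det ∧
      (T 0 0 • A + T 0 1 • B).rank ≤ r ∧ (T 1 0 • A + T 1 1 • B).rank ≤ s := by
  constructor
  · rintro ⟨A', B', hO, hA', hB'⟩
    obtain ⟨T, hT, hA, hB⟩ := hO.exists_rank_eq
    exact ⟨T, hT, hA ▸ hA', hB ▸ hB'⟩
  · rintro ⟨T, hT, hA, hB⟩
    exact ⟨_, _, inOrbit_of_isUnit_det A B hT, hA, hB⟩

end Pencil

/-- If `ρ(A, B) = (r, s)` and `r' ≥ s'`, then `(A, B) ∈ B_{r',s'}` if and only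
if `r' ≥ r` and `s' ≥ s`. -/
theorem mem_Bset_iff_minRanks_le {F : Type*} [Field F] {m n : ℕ}
    (A B : Matrix (Fin m) (Fin n) F) (r s r' s' : ℕ)
    (h : MinRanksAre A B r s) (h' : s' ≤ r') :
    InBset r' s' A B ↔ (r ≤ r' ∧ s ≤ s') := by
  obtain ⟨t₀, u₀, h₀, rfl, hs_min, ⟨t₁, u₁, h₁, rfl⟩, hr_min⟩ := h
  rw [inBset_iff_exists_isUnit_det]
  constructor
  · rintro ⟨T, hT, hA, hB⟩
    have hrow₁ : (T 1 0, T 1 1) ≠ 0 := fun hzero =>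
      hT.ne_zero <| det_fin_two_eq_zero_of_rows_mem_span_singleton
        (Submodule.mem_span_singleton_self _) (hzero ▸ Submodule.zero_mem _)
    refine ⟨?_, (hs_min _ _ hrow₁).trans hB⟩
    by_cases hrow₀ : (T 0 0, T 0 1) ∈ Submodule.span F {(t₀, u₀)}
    · -- then the second row is off the minimizing line, and `s' ≤ r'` bounds its rank
      have hrow₁' : (T 1 0, T 1 1) ∉ Submodule.span F {(t₀, u₀)} := fun h =>
        hT.ne_zero (det_fin_two_eq_zero_of_rows_mem_span_singleton hrow₀ h)
      exact (hr_min _ _ hrow₁').trans (hB.trans h')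
    · exact (hr_min _ _ hrow₀).trans hA
  · rintro ⟨hr, hs⟩
    exact ⟨_, isUnit_det_of_notMem_span_singleton h₀ h₁, by simpa using hr, by simpa using hs⟩
end

section
/- Let (A,B) be an n×n real matrix pencil. Then every nontrivial linear combination tA + uB with (t,u) ∈ ℝ²\{(0,0)} is invertible if and only if there exist P, U ∈ GL_n(ℝ), T ∈ GL_2(ℝ) and an n×n real matrix Q having no real eigenvalue such that (A,B) = (P,U,T)·(Q, E_n). In other words, a real n×n pencil has full minimal ranks (n,n) exactly when its orbit contains a pencil of the form Q + λE with Q having no real eigenvalues. -/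
/-!
Taking `(t, u) = (0, 1)` shows that `B` is invertible, and then `(A, B) = (B, E, E) · (B⁻¹A, E)`;
a real eigenvalue `μ` of `B⁻¹A` would make `μB - A` singular. Conversely, in a transformed pencil
`tA + uB = P (aQ + bE) Uᵀ` with `(a, b) = (t, u) T ≠ 0`, and `aQ + bE = -a (-(b/a) E - Q)` is
singular only if `-b/a` is an eigenvalue of `Q`.
-/

open Matrix Polynomial

namespace Matrix

variable {K ι : Type*} [Field K] [Fintype ι] [DecidableEq ι]

lemma isRoot_charpoly_iff_det_eq_zero (M : Matrix ι ι K) (μ : K) :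
    M.charpoly.IsRoot μ ↔ (μ • (1 : Matrix ι ι K) - M).det = 0 := by
  rw [IsRoot.def, eval_charpoly, smul_one_eq_diagonal, scalar_apply]

lemma isRoot_charpoly_inv_mul_iff {A B : Matrix ι ι K} (hB : IsUnit B.det) (μ : K) :
    (B⁻¹ * A).charpoly.IsRoot μ ↔ (μ • B - A).det = 0 := by
  have hfactor : μ • B - A = B * (μ • (1 : Matrix ι ι K) - B⁻¹ * A) := by
    rw [Matrix.mul_sub, Matrix.mul_smul, Matrix.mul_one, mul_nonsing_inv_cancel_left _ _ hB]
  rw [isRoot_charpoly_iff_det_eq_zero, hfactor, det_mul, mul_eq_zero, or_iff_right hB.ne_zero]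

lemma isUnit_det_smul_add_smul_one {Q : Matrix ι ι K} (hQ : ∀ μ, ¬ Q.charpoly.IsRoot μ)
    {a b : K} (hab : (a, b) ≠ 0) : IsUnit (a • Q + b • (1 : Matrix ι ι K)).det := by
  rcases eq_or_ne a 0 with rfl | ha
  · have hb : b ≠ 0 := fun hb => hab (by simp [hb])
    rw [zero_smul, zero_add, det_smul, det_one, mul_one]
    exact (isUnit_iff_ne_zero.mpr hb).pow _
  · have hfactor : a • Q + b • (1 : Matrix ι ι K) = (-a) • ((-b / a) • 1 - Q) := by
      rw [smul_sub, smul_smul, show -a * (-b / a) = b by field_simp]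
      module
    rw [hfactor, det_smul]
    exact ((isUnit_iff_ne_zero.mpr (neg_ne_zero.mpr ha)).pow _).mul
      (isUnit_iff_ne_zero.mpr ((isRoot_charpoly_iff_det_eq_zero Q _).not.mp (hQ _)))

lemma pair_vecMul_ne_zero {T : Matrix (Fin 2) (Fin 2) K} (hT : IsUnit T.det) {t u : K}
    (htu : (t, u) ≠ 0) : (t * T 0 0 + u * T 1 0, t * T 0 1 + u * T 1 1) ≠ 0 := by
  intro h
  obtain ⟨h0, h1⟩ := Prod.mk_eq_zero.mp h
  have hdet : T.det ≠ 0 := hT.ne_zero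
  rw [det_fin_two] at hdet
  have ht : t * (T 0 0 * T 1 1 - T 0 1 * T 1 0) = 0 := by
    linear_combination T 1 1 * h0 - T 1 0 * h1
  have hu : u * (T 0 0 * T 1 1 - T 0 1 * T 1 0) = 0 := by
    linear_combination T 0 0 * h1 - T 0 1 * h0
  exact htu (Prod.ext (by simpa [hdet] using ht) (by simpa [hdet] using hu))

lemma smul_add_smul_pencil_action (P U Q : Matrix ι ι K) (T : Matrix (Fin 2) (Fin 2) K)
    (t u : K) :
    t • (P * (T 0 0 • Q + T 0 1 • (1 : Matrix ι ι K)) * Uᵀ) +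
        u • (P * (T 1 0 • Q + T 1 1 • (1 : Matrix ι ι K)) * Uᵀ) =
      P * ((t * T 0 0 + u * T 1 0) • Q + (t * T 0 1 + u * T 1 1) • 1) * Uᵀ := by
  simp only [Matrix.mul_add, Matrix.add_mul, Matrix.mul_smul, Matrix.smul_mul]
  module

end Matrix

/-- A real `n × n` pencil `(A, B)` has every nontrivial combination `t A + u B`
invertible if and only if it lies in the orbit (under the action of
`GL_n(ℝ) × GL_n(ℝ) × GL_2(ℝ)`) of a pencil `(Q, E_n)` where `Q` has no real
eigenvalue (its characteristic polynomial has no real root). -/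
theorem full_minRanks_iff_no_real_eigenvalue {n : ℕ}
    (A B : Matrix (Fin n) (Fin n) ℝ) :
    (∀ t u : ℝ, (t, u) ≠ 0 → IsUnit (t • A + u • B).det) ↔
      ∃ (P U : Matrix (Fin n) (Fin n) ℝ) (T : Matrix (Fin 2) (Fin 2) ℝ)
        (Q : Matrix (Fin n) (Fin n) ℝ),
        IsUnit P.det ∧ IsUnit U.det ∧ IsUnit T.det ∧
        (∀ μ : ℝ, ¬ Q.charpoly.IsRoot μ) ∧
        A = P * (T 0 0 • Q + T 0 1 • (1 : Matrix (Fin n) (Fin n) ℝ)) * U.transpose ∧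
        B = P * (T 1 0 • Q + T 1 1 • (1 : Matrix (Fin n) (Fin n) ℝ)) * U.transpose := by
  constructor
  · intro h
    have hB : IsUnit B.det := by simpa using h 0 1 (by simp)
    refine ⟨B, 1, 1, B⁻¹ * A, hB, by simp, by simp, fun μ hμ => ?_, by simp [mul_nonsing_inv_cancel_left _ _ hB], by simp⟩
    rw [isRoot_charpoly_inv_mul_iff hB, sub_eq_neg_add, ← neg_one_smul ℝ A] at hμ
    exact (h (-1) μ (by simp)).ne_zero hμ
  · rintro ⟨P, U, T, Q, hP, hU, hT, hQ, rfl, rfl⟩ t u htu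
    rw [smul_add_smul_pencil_action, det_mul, det_mul, det_transpose]
    exact (hP.mul (isUnit_det_smul_add_smul_one hQ (pair_vecMul_ne_zero hT htu))).mul hU
end

section
/- Let F be a field, and let A, B be m×s matrices and C, D be n×s matrices over F such that 2·rank[A B] > 3s and 2·rank[C D] > 3s, where [A B] and [C D] denote the concatenated m×2s and n×2s matrices. Then for every (t₁,t₂) ∈ F² with t₁ ≠ 0, the matrix t₁(ACᵀ + BDᵀ) + t₂·BCᵀ has rank strictly greater than s. -/
/-!
Write `X = [A B]`, `Y = [C D]` and let `P` be the invertible block matrix `[[t₁, 0], [t₂, t₁]]`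
(blocks of size `s`). Then `X P Yᵀ = t₁ (A Cᵀ + B Dᵀ) + t₂ B Cᵀ`, and Sylvester's rank inequality
gives `rank (X P Yᵀ) ≥ rank X + rank Y - 2s > 3s - 2s = s`.
-/

open Matrix Module LinearMap

theorem LinearMap.finrank_range_add_finrank_range_le {F V₁ V₂ V₃ : Type*} [Field F]
    [AddCommGroup V₁] [Module F V₁] [AddCommGroup V₂] [Module F V₂] [FiniteDimensional F V₂]
    [AddCommGroup V₃] [Module F V₃] (f : V₂ →ₗ[F] V₃) (g : V₁ →ₗ[F] V₂) :
    finrank F (range f) + finrank F (range g) ≤ finrank F (range (f ∘ₗ g)) + finrank F V₂ := by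
  set h := f.domRestrict (range g)
  have hrange : range h = range (f ∘ₗ g) := by rw [range_domRestrict, range_comp]
  have hker : finrank F (ker h) ≤ finrank F (ker f) := by
    rw [← Submodule.finrank_map_subtype_eq, ker_domRestrict]
    exact Submodule.finrank_mono (Submodule.map_comap_le _ _)
  have hh := finrank_range_add_finrank_ker h
  have hf := finrank_range_add_finrank_ker f
  rw [hrange] at hh
  omega

theorem Matrix.rank_add_rank_le_rank_mul_add_card {F : Type*} [Field F] {l m n : Type*}
    [Fintype m] [Fintype n] (X : Matrix l m F) (Y : Matrix m n F) :
    X.rank + Y.rank ≤ (X * Y).rank + Fintype.card m := by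
  rw [rank, rank, rank, mulVecLin_mul, ← finrank_fintype_fun_eq_card F]
  exact LinearMap.finrank_range_add_finrank_range_le X.mulVecLin Y.mulVecLin

section ShearBlocks

variable {R : Type*} [CommRing R] {k : Type*} [Fintype k] [DecidableEq k]

theorem Matrix.isUnit_det_fromBlocks_smul_one {a : R} (ha : IsUnit a) (b : R) :
    IsUnit (fromBlocks (a • 1) 0 (b • 1) (a • 1) : Matrix (k ⊕ k) (k ⊕ k) R).det := by
  rw [det_fromBlocks_zero₁₂, det_smul, det_one, mul_one]
  exact (ha.pow _).mul (ha.pow _)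

theorem Matrix.fromCols_mul_fromBlocks_smul_one_mul_transpose {m n : Type*} [Fintype m]
    (A B : Matrix m k R) (C D : Matrix n k R) (a b : R) :
    fromCols A B * (fromBlocks (a • 1) 0 (b • 1) (a • 1) : Matrix (k ⊕ k) (k ⊕ k) R) *
        (fromCols C D)ᵀ
      = a • (A * Cᵀ + B * Dᵀ) + b • (B * Cᵀ) := by
  rw [transpose_fromCols, fromCols_mul_fromBlocks, fromCols_mul_fromRows]
  simp only [Matrix.mul_smul, Matrix.smul_mul, Matrix.mul_one, Matrix.mul_zero, zero_add,
    Matrix.add_mul, smul_add]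
  abel

end ShearBlocks

/-- If `2 rank [A B] > 3s` and `2 rank [C D] > 3s`, then for every
`(t₁, t₂)` with `t₁ ≠ 0`, the matrix `t₁ (A Cᵀ + B Dᵀ) + t₂ B Cᵀ` has rank
strictly greater than `s`. -/
theorem rank_combination_gt {F : Type*} [Field F] {m n s : ℕ}
    (A B : Matrix (Fin m) (Fin s) F) (C D : Matrix (Fin n) (Fin s) F)
    (hAB : 3 * s < 2 * (Matrix.fromCols A B).rank)
    (hCD : 3 * s < 2 * (Matrix.fromCols C D).rank) :
    ∀ t₁ t₂ : F, t₁ ≠ 0 →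
      s < (t₁ • (A * Cᵀ + B * Dᵀ) + t₂ • (B * Cᵀ)).rank := by
  intro t₁ t₂ ht₁
  let P : Matrix (Fin s ⊕ Fin s) (Fin s ⊕ Fin s) F := fromBlocks (t₁ • 1) 0 (t₂ • 1) (t₁ • 1)
  have hsyl := rank_add_rank_le_rank_mul_add_card (fromCols A B * P) (fromCols C D)ᵀ
  rw [rank_mul_eq_left_of_isUnit_det P _ (isUnit_det_fromBlocks_smul_one ht₁.isUnit t₂),
    rank_transpose, fromCols_mul_fromBlocks_smul_one_mul_transpose, Fintype.card_sum,
    Fintype.card_fin] at hsyl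
  omega
end

section
/- For every positive integer k, the set B_{2k−1,2k−1} of real 2k×2k pencils is not closed in the norm topology, and its closure equals B_{2k,2k−1}; here B_{2k−1,2k−1} = {(A,B) : there exist linearly independent (t₁,u₁),(t₂,u₂) ∈ ℝ² with rank(t_iA + u_iB) ≤ 2k−1 for i = 1,2} and B_{2k,2k−1} = {(A,B) : there exists (t,u) ∈ ℝ²\{(0,0)} with rank(tA + uB) ≤ 2k−1}. -/
open Matrix Polynomial Filter Topology

section Auxiliary

lemma li_pair_iff (a b c d : ℝ) :
    LinearIndependent ℝ ![((a,b) : ℝ × ℝ), ((c,d) : ℝ × ℝ)] ↔ a * d - b * c ≠ 0 := by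
  rw [linearIndependent_fin2]
  simp only [Matrix.cons_val_one, Matrix.head_cons, Matrix.cons_val_zero, Prod.smul_mk,
    smul_eq_mul, Prod.mk.injEq, ne_eq, Prod.mk_eq_zero, not_and]
  constructor
  · rintro ⟨h1, h2⟩ hdet
    by_cases hc : c = 0
    · have hd : d ≠ 0 := h1 hc
      have ha : a = 0 := by
        have had : a * d = 0 := by subst hc; linarith
        rcases mul_eq_zero.1 had with h | h
        · exact h
        · exact absurd h hd
      exact h2 (b / d) (by rw [hc, ha, mul_zero]) (by field_simp)
    · refine h2 (a / c) (by field_simp) ?_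
      field_simp
      nlinarith [hdet]
  · intro h
    constructor
    · rintro rfl rfl; apply h; ring
    · intro s h1 h2; apply h; rw [← h1, ← h2]; ring

lemma rank_le_iff_det {m : ℕ} (M : Matrix (Fin (m + 1)) (Fin (m + 1)) ℝ) :
    M.rank ≤ m ↔ M.det = 0 := by
  constructor
  · intro h
    by_contra hd
    have hu : IsUnit M := (Matrix.isUnit_iff_isUnit_det M).2 (isUnit_iff_ne_zero.2 hd)
    rw [Matrix.rank_of_isUnit M hu, Fintype.card_fin] at h
    omega
  · intro hd
    obtain ⟨v, hv0, hv⟩ := Matrix.exists_mulVec_eq_zero_iff.2 hd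
    have hker : v ∈ LinearMap.ker M.mulVecLin := by
      simpa [Matrix.mulVecLin_apply] using hv
    have hnt : Nontrivial (LinearMap.ker M.mulVecLin) :=
      ⟨⟨⟨v, hker⟩, 0, by simp [hv0]⟩⟩
    have hpos : 0 < Module.finrank ℝ (LinearMap.ker M.mulVecLin) :=
      Module.finrank_pos_iff.2 hnt
    have := LinearMap.finrank_range_add_finrank_ker M.mulVecLin
    rw [Module.finrank_fin_fun] at this
    have : M.rank = Module.finrank ℝ (LinearMap.range M.mulVecLin) := rfl
    omega

private lemma exists_root_of_odd_aux (p : ℝ[X]) (h : Odd p.natDegree)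
    (hlc : 0 ≤ p.leadingCoeff) : ∃ x, p.eval x = 0 := by
  have hp0 : p ≠ 0 := by
    intro h0; rw [h0, natDegree_zero] at h; exact (Nat.not_odd_iff_even.2 Even.zero) h
  have hdeg : 0 < p.degree := natDegree_pos_iff_degree_pos.1 (h.pos)
  -- value ≥ 0 somewhere
  obtain ⟨b, hb⟩ := ((p.tendsto_atTop_of_leadingCoeff_nonneg hdeg hlc).eventually_ge_atTop 0).exists
  -- value ≤ 0 somewhere : consider q = p.comp (-X)
  set q : ℝ[X] := p.comp (-X) with hq
  have hqdeg : q.natDegree = p.natDegree := by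
    rw [hq, natDegree_comp]; simp
  have hqlc : q.leadingCoeff ≤ 0 := by
    have : q.leadingCoeff = p.leadingCoeff * (-1) ^ p.natDegree := by
      rw [hq, leadingCoeff_comp (by simp)]; simp
    rw [this, h.neg_one_pow]
    nlinarith
  have hqdeg' : 0 < q.degree := by
    rw [← natDegree_pos_iff_degree_pos, hqdeg]; exact h.pos
  obtain ⟨a, ha⟩ := ((q.tendsto_atBot_of_leadingCoeff_nonpos hqdeg' hqlc).eventually_le_atBot 0).exists
  have ha' : p.eval (-a) ≤ 0 := by
    have : q.eval a = p.eval (-a) := by rw [hq, eval_comp]; simp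
    linarith [ha, this.symm.le, this.le]
  have := intermediate_value_univ (-a) b p.continuous
  obtain ⟨x, hx⟩ := this ⟨ha', hb⟩
  exact ⟨x, hx⟩

lemma exists_root_of_odd (p : ℝ[X]) (h : Odd p.natDegree) : ∃ x, p.eval x = 0 := by
  rcases le_total 0 p.leadingCoeff with hlc | hlc
  · exact exists_root_of_odd_aux p h hlc
  · obtain ⟨x, hx⟩ := exists_root_of_odd_aux (-p) (by rwa [natDegree_neg])
      (by rw [leadingCoeff_neg]; linarith)
    exact ⟨x, by simpa using hx⟩

private lemma exists_root_of_odd_aux' (p : ℝ[X]) (h : Odd p.natDegree)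
    (hlc : 0 ≤ p.leadingCoeff) : ∃ x, p.eval x = 0 := by
  have hdeg : 0 < p.degree := natDegree_pos_iff_degree_pos.1 (h.pos)
  obtain ⟨b, hb⟩ := ((p.tendsto_atTop_of_leadingCoeff_nonneg hdeg hlc).eventually_ge_atTop 0).exists
  set q : ℝ[X] := p.comp (-X) with hq
  have hqlc : q.leadingCoeff ≤ 0 := by
    have : q.leadingCoeff = p.leadingCoeff * (-1) ^ p.natDegree := by
      rw [hq, leadingCoeff_comp (by simp)]; simp
    rw [this, h.neg_one_pow]
    nlinarith
  have hqdeg' : 0 < q.degree := by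
    rw [← natDegree_pos_iff_degree_pos, hq, natDegree_comp]
    simpa using h.pos
  obtain ⟨a, ha⟩ :=
    ((q.tendsto_atBot_of_leadingCoeff_nonpos hqdeg' hqlc).eventually_le_atBot 0).exists
  have ha' : p.eval (-a) ≤ 0 := by
    have hqa : q.eval a = p.eval (-a) := by rw [hq, eval_comp]; simp
    linarith [hqa ▸ ha]
  obtain ⟨x, hx⟩ := intermediate_value_univ (-a) b p.continuous ⟨ha', hb⟩
  exact ⟨x, hx⟩

lemma exists_root_of_odd' (p : ℝ[X]) (h : Odd p.natDegree) : ∃ x, p.eval x = 0 := by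
  rcases le_total 0 p.leadingCoeff with hlc | hlc
  · exact exists_root_of_odd_aux' p h hlc
  · obtain ⟨x, hx⟩ := exists_root_of_odd_aux' (-p) (by rwa [natDegree_neg])
      (by rw [leadingCoeff_neg]; linarith)
    exact ⟨x, by simpa using hx⟩

lemma core_perturb {m : ℕ} (hodd : Odd m) (K : Matrix (Fin (m + 1)) (Fin (m + 1)) ℝ)
    (hdet : K.det = 0) :
    ∃ (V : Matrix (Fin (m + 1)) (Fin (m + 1)) ℝ) (μ : ℝ), ∀ δ : ℝ,
      (δ • (1 : Matrix (Fin (m + 1)) (Fin (m + 1)) ℝ) - (K + δ • V)).det = 0 ∧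
      (μ • (1 : Matrix (Fin (m + 1)) (Fin (m + 1)) ℝ) - (K + δ • V)).det = 0 := by
  classical
  obtain ⟨v, hv0, hKv⟩ := Matrix.exists_mulVec_eq_zero_iff.2 hdet
  obtain ⟨j, hj⟩ : ∃ j, v j ≠ 0 := by
    by_contra hcon
    push_neg at hcon
    exact hv0 (funext hcon)
  set w : Fin (m + 1) → ℝ := (v j)⁻¹ • v with hw
  have hKw : K *ᵥ w = 0 := by rw [hw, Matrix.mulVec_smul, hKv, smul_zero]
  have hwj : w j = 1 := by rw [hw]; simp [inv_mul_cancel₀ hj]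
  set e : Fin (m + 1) → ℝ := w - Pi.single j 1 with he
  have hej : e j = 0 := by simp [he, hwj]
  set E : Matrix (Fin (m + 1)) (Fin (m + 1)) ℝ := vecMulVec e (Pi.single j 1) with hE
  have hEE : E * E = 0 := by
    ext i l
    rw [Matrix.mul_apply]
    simp only [hE, vecMulVec_apply, Matrix.zero_apply]
    have hterm : ∀ r : Fin (m + 1), e i * Pi.single (M := fun _ => ℝ) j 1 r *
        (e r * Pi.single (M := fun _ => ℝ) j 1 l)
        = if r = j then e i * e j * Pi.single (M := fun _ => ℝ) j 1 l else 0 := by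
      intro r
      by_cases hr : r = j
      · subst hr; simp; ring
      · simp [Pi.single_apply, hr]
    rw [Finset.sum_congr rfl fun r _ => hterm r]
    simp [hej]
  set P : Matrix (Fin (m + 1)) (Fin (m + 1)) ℝ := 1 + E with hP
  set Pinv : Matrix (Fin (m + 1)) (Fin (m + 1)) ℝ := 1 - E with hPinv
  have hP1 : P * Pinv = 1 := by
    have : P * Pinv = 1 - E * E := by rw [hP, hPinv]; noncomm_ring
    rw [this, hEE, sub_zero]
  have hP2 : Pinv * P = 1 := by
    have : Pinv * P = 1 - E * E := by rw [hP, hPinv]; noncomm_ring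
    rw [this, hEE, sub_zero]
  set L : Matrix (Fin (m + 1)) (Fin (m + 1)) ℝ := Pinv * K * P with hL
  have hPcol : ∀ r, P r j = w r := by
    intro r
    by_cases hr : r = j
    · subst hr
      simp [hP, hE, vecMulVec_apply, Matrix.add_apply, Matrix.one_apply, hej, hwj]
    · simp [hP, hE, vecMulVec_apply, Matrix.add_apply, Matrix.one_apply, hr, he]
  have hKP : ∀ i, (K * P) i j = 0 := by
    intro i
    rw [Matrix.mul_apply]
    have hs : ∑ r, K i r * P r j = ∑ r, K i r * w r :=
      Finset.sum_congr rfl fun r _ => by rw [hPcol r]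
    rw [hs]
    have := congrFun hKw i
    simpa [Matrix.mulVec, dotProduct] using this
  have hLcol : ∀ i, L i j = 0 := by
    intro i
    rw [hL, Matrix.mul_assoc, Matrix.mul_apply]
    have : ∀ r, Pinv i r * (K * P) r j = 0 := fun r => by rw [hKP r, mul_zero]
    simp [this]
  set L' : Matrix (Fin m) (Fin m) ℝ := L.submatrix j.succAbove j.succAbove with hL'
  have hcharp : ∀ x : ℝ, (L'.charpoly).eval x
      = (x • (1 : Matrix (Fin m) (Fin m) ℝ) - L').det := by
    intro x
    have h1 : (L'.charpoly).eval x = (evalRingHom x) (L'.charmatrix).det := rfl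
    rw [h1, RingHom.map_det]
    congr 1
    ext a b
    by_cases hab : a = b
    · subst hab
      simp [charmatrix_apply, Matrix.one_apply, Matrix.smul_apply, Matrix.sub_apply,
        Matrix.diagonal_apply, RingHom.mapMatrix_apply, Matrix.map_apply]
    · simp [charmatrix_apply, Matrix.one_apply, hab, Matrix.diagonal_apply,
        Matrix.smul_apply, Matrix.sub_apply, RingHom.mapMatrix_apply, Matrix.map_apply]
  obtain ⟨μ, hμ⟩ : ∃ x, (L'.charpoly).eval x = 0 := by
    apply exists_root_of_odd'
    rw [Matrix.charpoly_natDegree_eq_dim, Fintype.card_fin]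
    exact hodd
  set S : Matrix (Fin (m + 1)) (Fin (m + 1)) ℝ := Matrix.single j j 1 with hS
  set V : Matrix (Fin (m + 1)) (Fin (m + 1)) ℝ := P * S * Pinv with hV
  have hKform : K = P * L * Pinv := by
    rw [hL]
    calc K = (P * Pinv) * K * (P * Pinv) := by rw [hP1]; simp
    _ = P * (Pinv * K * P) * Pinv := by simp only [Matrix.mul_assoc]
  have hdetPP : P.det * Pinv.det = 1 := by rw [← Matrix.det_mul, hP1, Matrix.det_one]
  have hkey : ∀ x δ : ℝ, (x • (1 : Matrix (Fin (m + 1)) (Fin (m + 1)) ℝ) - (K + δ • V)).det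
      = (x - δ) * (x • (1 : Matrix (Fin m) (Fin m) ℝ) - L').det := by
    intro x δ
    have hstep : x • (1 : Matrix (Fin (m + 1)) (Fin (m + 1)) ℝ) - (K + δ • V)
        = P * (x • 1 - (L + δ • S)) * Pinv := by
      rw [hV]
      conv_lhs => rw [hKform]
      simp only [Matrix.mul_sub, Matrix.sub_mul, Matrix.mul_add, Matrix.add_mul,
        mul_smul_comm, smul_mul_assoc, Matrix.mul_one, Matrix.one_mul, Matrix.mul_assoc, hP1]
    rw [hstep, Matrix.det_mul, Matrix.det_mul]
    have hcol : ∀ i, (x • (1 : Matrix (Fin (m + 1)) (Fin (m + 1)) ℝ) - (L + δ • S)) i j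
        = if i = j then x - δ else 0 := by
      intro i
      by_cases hij : i = j
      · subst hij
        simp [Matrix.sub_apply, Matrix.add_apply, Matrix.smul_apply, Matrix.one_apply,
          hLcol, hS, Matrix.single_apply_same]
      · have h1 : ∀ c : ℝ, Matrix.single j j c i j = 0 := fun c =>
          Matrix.single_apply_of_ne _ _ _ _ _ (fun hc => hij hc.1.symm)
        simp [Matrix.sub_apply, Matrix.add_apply, Matrix.smul_apply, Matrix.one_apply,
          hij, hLcol, hS, h1]
    have hmid : (x • (1 : Matrix (Fin (m + 1)) (Fin (m + 1)) ℝ) - (L + δ • S)).det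
        = (x - δ) * (x • (1 : Matrix (Fin m) (Fin m) ℝ) - L').det := by
      rw [Matrix.det_succ_column _ j, Finset.sum_eq_single j]
      · rw [hcol j, if_pos rfl]
        have hsub : (x • (1 : Matrix (Fin (m + 1)) (Fin (m + 1)) ℝ) - (L + δ • S)).submatrix
            j.succAbove j.succAbove = x • (1 : Matrix (Fin m) (Fin m) ℝ) - L' := by
          ext a b
          have hne : j.succAbove a ≠ j := Fin.succAbove_ne j a
          have h2 : ∀ c : ℝ, Matrix.single j j c (j.succAbove a) (j.succAbove b) = 0 := fun c =>
            Matrix.single_apply_of_ne _ _ _ _ _ (fun hc => hne hc.1.symm)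
          simp [Matrix.submatrix_apply, Matrix.sub_apply, Matrix.add_apply, Matrix.smul_apply,
            Matrix.one_apply, hL', hS, h2, Fin.succAbove_right_inj]
        rw [hsub]
        have hpow : (-1 : ℝ) ^ ((j : ℕ) + (j : ℕ)) = 1 := Even.neg_one_pow ⟨j, rfl⟩
        rw [hpow, one_mul]
      · intro i _ hij
        rw [hcol i, if_neg hij, mul_zero, zero_mul]
      · intro h; exact absurd (Finset.mem_univ j) h
    rw [hmid]
    linear_combination ((x - δ) * (x • (1 : Matrix (Fin m) (Fin m) ℝ) - L').det) * hdetPP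
  refine ⟨V, μ, fun δ => ⟨?_, ?_⟩⟩
  · rw [hkey δ δ, sub_self, zero_mul]
  · rw [hkey μ δ, ← hcharp μ, hμ, mul_zero]

lemma isClosed_Tdet {m : ℕ} :
    IsClosed {p : Matrix (Fin (m + 1)) (Fin (m + 1)) ℝ × Matrix (Fin (m + 1)) (Fin (m + 1)) ℝ |
      ∃ t u : ℝ, (t, u) ≠ 0 ∧ (t • p.1 + u • p.2).det = 0} := by
  classical
  have hset : {p : Matrix (Fin (m + 1)) (Fin (m + 1)) ℝ × Matrix (Fin (m + 1)) (Fin (m + 1)) ℝ |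
      ∃ t u : ℝ, (t, u) ≠ 0 ∧ (t • p.1 + u • p.2).det = 0}
      = Prod.snd '' {z : (Metric.sphere (0 : ℝ × ℝ) 1) ×
          (Matrix (Fin (m + 1)) (Fin (m + 1)) ℝ × Matrix (Fin (m + 1)) (Fin (m + 1)) ℝ) |
        ((z.1 : ℝ × ℝ).1 • z.2.1 + (z.1 : ℝ × ℝ).2 • z.2.2).det = 0} := by
    ext p
    constructor
    · rintro ⟨t, u, htu, hdet⟩
      have hnorm : ‖(t, u)‖ ≠ 0 := norm_ne_zero_iff.2 htu
      set c : ℝ := ‖(t, u)‖⁻¹ with hc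
      have hc0 : c ≠ 0 := inv_ne_zero hnorm
      refine ⟨(⟨c • (t, u), ?_⟩, p), ?_, rfl⟩
      · rw [mem_sphere_zero_iff_norm, norm_smul, hc]
        rw [Real.norm_eq_abs, abs_of_nonneg (inv_nonneg.2 (norm_nonneg _)), inv_mul_cancel₀ hnorm]
      · show (((c • (t, u) : ℝ × ℝ)).1 • p.1 + ((c • (t, u) : ℝ × ℝ)).2 • p.2).det = 0
        have : ((c • (t, u) : ℝ × ℝ)).1 • p.1 + ((c • (t, u) : ℝ × ℝ)).2 • p.2
            = c • (t • p.1 + u • p.2) := by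
          simp [Prod.smul_def, smul_smul, smul_add]
        rw [this, Matrix.det_smul, hdet, mul_zero]
    · rintro ⟨⟨⟨tu, htu⟩, q⟩, hdet, rfl⟩
      refine ⟨tu.1, tu.2, ?_, ?_⟩
      · intro h0
        rw [mem_sphere_zero_iff_norm] at htu
        have : tu = 0 := by
          have h1 : tu.1 = 0 := congrArg Prod.fst h0
          have h2 : tu.2 = 0 := congrArg Prod.snd h0
          exact Prod.ext h1 h2
        rw [this] at htu; simp at htu
      · exact hdet
  rw [hset]
  apply isClosedMap_snd_of_compactSpace
  have hcont : Continuous fun z : (Metric.sphere (0 : ℝ × ℝ) 1) ×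
      (Matrix (Fin (m + 1)) (Fin (m + 1)) ℝ × Matrix (Fin (m + 1)) (Fin (m + 1)) ℝ) =>
      ((z.1 : ℝ × ℝ).1 • z.2.1 + (z.1 : ℝ × ℝ).2 • z.2.2).det := by
    apply Continuous.matrix_det
    apply Continuous.add
    · exact ((continuous_subtype_val.comp continuous_fst).fst).smul
        (continuous_fst.comp continuous_snd)
    · exact ((continuous_subtype_val.comp continuous_fst).snd).smul
        (continuous_snd.comp continuous_snd)
  exact isClosed_eq hcont continuous_const


lemma main_aux (m : ℕ) (hmodd : Odd m) :
    ¬ IsClosed {p : Matrix (Fin (m + 1)) (Fin (m + 1)) ℝ ×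
        Matrix (Fin (m + 1)) (Fin (m + 1)) ℝ |
      ∃ t₁ u₁ t₂ u₂ : ℝ,
        LinearIndependent ℝ ![((t₁, u₁) : ℝ × ℝ), ((t₂, u₂) : ℝ × ℝ)] ∧
        (t₁ • p.1 + u₁ • p.2).rank ≤ m ∧
        (t₂ • p.1 + u₂ • p.2).rank ≤ m} ∧
    closure {p : Matrix (Fin (m + 1)) (Fin (m + 1)) ℝ ×
        Matrix (Fin (m + 1)) (Fin (m + 1)) ℝ |
      ∃ t₁ u₁ t₂ u₂ : ℝ,
        LinearIndependent ℝ ![((t₁, u₁) : ℝ × ℝ), ((t₂, u₂) : ℝ × ℝ)] ∧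
        (t₁ • p.1 + u₁ • p.2).rank ≤ m ∧
        (t₂ • p.1 + u₂ • p.2).rank ≤ m} =
      {p : Matrix (Fin (m + 1)) (Fin (m + 1)) ℝ ×
          Matrix (Fin (m + 1)) (Fin (m + 1)) ℝ |
        ∃ t u : ℝ, (t, u) ≠ 0 ∧ (t • p.1 + u • p.2).rank ≤ m} := by
  classical
  set Sset := {p : Matrix (Fin (m + 1)) (Fin (m + 1)) ℝ ×
        Matrix (Fin (m + 1)) (Fin (m + 1)) ℝ |
      ∃ t₁ u₁ t₂ u₂ : ℝ,
        LinearIndependent ℝ ![((t₁, u₁) : ℝ × ℝ), ((t₂, u₂) : ℝ × ℝ)] ∧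
        (t₁ • p.1 + u₁ • p.2).rank ≤ m ∧
        (t₂ • p.1 + u₂ • p.2).rank ≤ m} with hSset
  set Tset := {p : Matrix (Fin (m + 1)) (Fin (m + 1)) ℝ ×
          Matrix (Fin (m + 1)) (Fin (m + 1)) ℝ |
        ∃ t u : ℝ, (t, u) ≠ 0 ∧ (t • p.1 + u • p.2).rank ≤ m} with hTset
  -- T is closed
  have hTeq : Tset = {p : Matrix (Fin (m + 1)) (Fin (m + 1)) ℝ ×
      Matrix (Fin (m + 1)) (Fin (m + 1)) ℝ |
      ∃ t u : ℝ, (t, u) ≠ 0 ∧ (t • p.1 + u • p.2).det = 0} := by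
    rw [hTset]
    ext p
    simp only [Set.mem_setOf_eq, rank_le_iff_det]
  have hTclosed : IsClosed Tset := by rw [hTeq]; exact isClosed_Tdet
  -- S ⊆ T
  have hST : Sset ⊆ Tset := by
    rintro p ⟨t₁, u₁, t₂, u₂, hli, h1, h2⟩
    rw [li_pair_iff] at hli
    refine ⟨t₁, u₁, ?_, h1⟩
    intro h0
    rw [Prod.mk_eq_zero] at h0
    apply hli
    rw [h0.1, h0.2]
    ring
  -- the hard inclusion T ⊆ closure S
  have hTS : Tset ⊆ closure Sset := by
    rintro ⟨A, B⟩ ⟨t₀, u₀, hne, hrank⟩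
    have hMdet : (t₀ • A + u₀ • B).det = 0 := (rank_le_iff_det _).1 hrank
    have hne' : ¬(t₀ = 0 ∧ u₀ = 0) := by
      intro h; exact hne (by rw [Prod.mk_eq_zero]; exact h)
    have hD0 : t₀ ^ 2 + u₀ ^ 2 ≠ 0 := by
      intro h
      apply hne'
      constructor <;> nlinarith [sq_nonneg t₀, sq_nonneg u₀]
    set M' : Matrix (Fin (m + 1)) (Fin (m + 1)) ℝ := (-u₀) • A + t₀ • B with hM'
    by_cases hM'det : M'.det = 0
    · apply subset_closure
      refine ⟨t₀, u₀, -u₀, t₀, ?_, hrank, (rank_le_iff_det _).2 hM'det⟩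
      rw [li_pair_iff]
      have heq : t₀ * t₀ - u₀ * (-u₀) = t₀ ^ 2 + u₀ ^ 2 := by ring
      rw [heq]
      exact hD0
    · have hunit : IsUnit M'.det := isUnit_iff_ne_zero.2 hM'det
      set K : Matrix (Fin (m + 1)) (Fin (m + 1)) ℝ := M'⁻¹ * (t₀ • A + u₀ • B) with hK
      have hKdet : K.det = 0 := by rw [hK, Matrix.det_mul, hMdet, mul_zero]
      obtain ⟨V, μ, hVμ⟩ := core_perturb hmodd K hKdet
      set W : Matrix (Fin (m + 1)) (Fin (m + 1)) ℝ := M' * V with hW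
      set q : ℝ → Matrix (Fin (m + 1)) (Fin (m + 1)) ℝ × Matrix (Fin (m + 1)) (Fin (m + 1)) ℝ :=
        fun δ => (A + (δ * (t₀ / (t₀ ^ 2 + u₀ ^ 2))) • W,
          B + (δ * (u₀ / (t₀ ^ 2 + u₀ ^ 2))) • W) with hq
      have hcombo : ∀ δ x : ℝ, (t₀ + x * u₀) • (q δ).1 + (u₀ - x * t₀) • (q δ).2
          = M' * ((K + δ • V) + (-x) • 1) := by
        intro δ x
        have hrhs : M' * ((K + δ • V) + (-x) • 1)
            = (t₀ • A + u₀ • B) + δ • W + (-x) • M' := by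
          rw [Matrix.mul_add, Matrix.mul_add, hK,
            Matrix.mul_nonsing_inv_cancel_left _ _ hunit, mul_smul_comm, mul_smul_comm,
            Matrix.mul_one, hW]
        rw [hrhs, hq, hM']
        show (t₀ + x * u₀) • (A + (δ * (t₀ / (t₀ ^ 2 + u₀ ^ 2))) • W)
              + (u₀ - x * t₀) • (B + (δ * (u₀ / (t₀ ^ 2 + u₀ ^ 2))) • W)
            = (t₀ • A + u₀ • B) + δ • W + (-x) • ((-u₀) • A + t₀ • B)
        match_scalars
        · ring
        · linear_combination δ * mul_inv_cancel₀ hD0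
        · ring
      have hdet0 : ∀ δ x : ℝ,
          (x • (1 : Matrix (Fin (m + 1)) (Fin (m + 1)) ℝ) - (K + δ • V)).det = 0 →
          ((t₀ + x * u₀) • (q δ).1 + (u₀ - x * t₀) • (q δ).2).det = 0 := by
        intro δ x hx
        rw [hcombo, Matrix.det_mul]
        have hneg : (K + δ • V) + (-x) • (1 : Matrix (Fin (m + 1)) (Fin (m + 1)) ℝ)
            = -(x • 1 - (K + δ • V)) := by module
        rw [hneg, Matrix.det_neg, hx, mul_zero, mul_zero]
      have hqS : ∀ δ : ℝ, δ ≠ μ → q δ ∈ Sset := by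
        intro δ hδ
        obtain ⟨h1, h2⟩ := hVμ δ
        refine ⟨t₀ + δ * u₀, u₀ - δ * t₀, t₀ + μ * u₀, u₀ - μ * t₀, ?_,
          (rank_le_iff_det _).2 (hdet0 δ δ h1), (rank_le_iff_det _).2 (hdet0 δ μ h2)⟩
        rw [li_pair_iff]
        have heq2 : (t₀ + δ * u₀) * (u₀ - μ * t₀) - (u₀ - δ * t₀) * (t₀ + μ * u₀)
            = (δ - μ) * (t₀ ^ 2 + u₀ ^ 2) := by ring
        rw [heq2]
        exact mul_ne_zero (sub_ne_zero.2 hδ) hD0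
      by_cases hμ0 : μ = 0
      · have hδne : ∀ i : ℕ, (1 / (i + 1) : ℝ) ≠ μ := by
          intro i
          rw [hμ0]
          positivity
        have htd : Tendsto (fun i : ℕ => q (1 / (i + 1) : ℝ)) atTop (𝓝 (A, B)) := by
          have hδt : Tendsto (fun i : ℕ => (1 : ℝ) / (i + 1)) atTop (𝓝 0) :=
            tendsto_one_div_add_atTop_nhds_zero_nat
          have h1 : Tendsto
              (fun i : ℕ => A + ((1 / (i + 1) : ℝ) * (t₀ / (t₀ ^ 2 + u₀ ^ 2))) • W)
              atTop (𝓝 A) := by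
            have := ((hδt.mul_const (t₀ / (t₀ ^ 2 + u₀ ^ 2))).smul_const W).const_add A
            simpa using this
          have h2 : Tendsto
              (fun i : ℕ => B + ((1 / (i + 1) : ℝ) * (u₀ / (t₀ ^ 2 + u₀ ^ 2))) • W)
              atTop (𝓝 B) := by
            have := ((hδt.mul_const (u₀ / (t₀ ^ 2 + u₀ ^ 2))).smul_const W).const_add B
            simpa using this
          exact h1.prodMk_nhds h2
        exact mem_closure_of_tendsto htd
          (Filter.Eventually.of_forall fun i => hqS _ (hδne i))
      · have hq0 : q 0 = (A, B) := by
          rw [hq]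
          simp
        have := hqS 0 (fun h => hμ0 h.symm)
        rw [hq0] at this
        exact subset_closure this
  have hcl : closure Sset = Tset := le_antisymm (closure_minimal hST hTclosed) hTS
  refine ⟨?_, hcl⟩
  intro hclosed
  have hp0T : ((0 : Matrix (Fin (m + 1)) (Fin (m + 1)) ℝ),
      (1 : Matrix (Fin (m + 1)) (Fin (m + 1)) ℝ)) ∈ Tset := by
    refine ⟨1, 0, ?_, ?_⟩
    · intro h; rw [Prod.mk_eq_zero] at h; exact one_ne_zero h.1
    · have hz : (1 : ℝ) • (0 : Matrix (Fin (m + 1)) (Fin (m + 1)) ℝ) + (0 : ℝ) • 1 = 0 := by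
        simp
      rw [hz]
      exact (rank_le_iff_det _).2 Matrix.det_zero
  have hp0S : ((0 : Matrix (Fin (m + 1)) (Fin (m + 1)) ℝ),
      (1 : Matrix (Fin (m + 1)) (Fin (m + 1)) ℝ)) ∉ Sset := by
    rintro ⟨t₁, u₁, t₂, u₂, hli, h1, h2⟩
    rw [li_pair_iff] at hli
    have hu : ∀ t u : ℝ,
        ((t • (0 : Matrix (Fin (m + 1)) (Fin (m + 1)) ℝ) + u • 1).rank ≤ m) → u = 0 := by
      intro t u h
      have hz : t • (0 : Matrix (Fin (m + 1)) (Fin (m + 1)) ℝ) + u • 1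
          = u • (1 : Matrix (Fin (m + 1)) (Fin (m + 1)) ℝ) := by simp
      rw [hz] at h
      have := (rank_le_iff_det _).1 h
      rw [Matrix.det_smul, Matrix.det_one, mul_one, Fintype.card_fin] at this
      exact pow_eq_zero_iff (Nat.succ_ne_zero m) |>.1 this
    have hu1 : u₁ = 0 := hu t₁ u₁ h1
    have hu2 : u₂ = 0 := hu t₂ u₂ h2
    apply hli
    rw [hu1, hu2]
    ring
  rw [← hclosed.closure_eq, hcl] at hp0S
  exact hp0S hp0T

end Auxiliary

/-- The set `B_{2k-1,2k-1}` of real `2k × 2k` pencils (those admitting two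
linearly independent combinations of rank at most `2k - 1`) is not closed, and
its closure is `B_{2k,2k-1}` (the pencils admitting one nontrivial combination
of rank at most `2k - 1`). -/
theorem closure_B_2km1_2km1 (k : ℕ) (hk : 0 < k) :
    ¬ IsClosed {p : Matrix (Fin (2 * k)) (Fin (2 * k)) ℝ ×
        Matrix (Fin (2 * k)) (Fin (2 * k)) ℝ |
      ∃ t₁ u₁ t₂ u₂ : ℝ,
        LinearIndependent ℝ ![((t₁, u₁) : ℝ × ℝ), ((t₂, u₂) : ℝ × ℝ)] ∧
        (t₁ • p.1 + u₁ • p.2).rank ≤ 2 * k - 1 ∧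
        (t₂ • p.1 + u₂ • p.2).rank ≤ 2 * k - 1} ∧
    closure {p : Matrix (Fin (2 * k)) (Fin (2 * k)) ℝ ×
        Matrix (Fin (2 * k)) (Fin (2 * k)) ℝ |
      ∃ t₁ u₁ t₂ u₂ : ℝ,
        LinearIndependent ℝ ![((t₁, u₁) : ℝ × ℝ), ((t₂, u₂) : ℝ × ℝ)] ∧
        (t₁ • p.1 + u₁ • p.2).rank ≤ 2 * k - 1 ∧
        (t₂ • p.1 + u₂ • p.2).rank ≤ 2 * k - 1} =
      {p : Matrix (Fin (2 * k)) (Fin (2 * k)) ℝ ×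
          Matrix (Fin (2 * k)) (Fin (2 * k)) ℝ |
        ∃ t u : ℝ, (t, u) ≠ 0 ∧ (t • p.1 + u • p.2).rank ≤ 2 * k - 1} := by
  obtain ⟨m, hm2, hmodd⟩ : ∃ m, 2 * k = m + 1 ∧ Odd m :=
    ⟨2 * k - 1, by omega, ⟨k - 1, by omega⟩⟩
  rw [hm2]
  simp only [Nat.add_sub_cancel]
  exact main_aux m hmodd
end
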